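/- With a, x, y as in the generalized setting (x_0=0, x_1=1, x_n = x_{n-1} + a x_{n-2}; y_0=2, y_1=1, y_n = y_{n-1} + a y_{n-2}), for all natural numbers n and l: x_n · y_{n+l} = x_{2n+l} − (−a)^n · x_l. -/
import Mathlib


def x (a : ℕ) : ℕ → ℤ
  | 0 => 0
  | 1 => 1
  | n + 2 => x a (n + 1) + (a : ℤ) * x a n

def y (a : ℕ) : ℕ → ℤ
  | 0 => 2
  | 1 => 1
  | n + 2 => y a (n + 1) + (a : ℤ) * y a n

lemma xr (a n : ℕ) : x a (n + 2) = x a (n + 1) + (a : ℤ) * x a n := rfl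

lemma yx (a : ℕ) : ∀ m, y a m = 2 * x a (m + 1) - x a m
  | 0 => by simp [x, y]
  | 1 => by simp [x, y]
  | m + 2 => by
    have h1 := yx a (m + 1)
    have h2 := yx a m
    show y a (m + 1) + (a : ℤ) * y a m = 2 * (x a (m + 1 + 1) + a * x a (m + 1)) -
      (x a (m + 1) + a * x a m)
    rw [h1, h2]; ring

lemma addf (a n : ℕ) : ∀ l, x a (n + l + 1) =
    x a (n + 1) * x a (l + 1) + (a : ℤ) * x a n * x a l
  | 0 => by simp [x]
  | 1 => by
    show x a (n + 1) + (a : ℤ) * x a n = _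
    simp [x]
  | l + 2 => by
    have h1 := addf a n (l + 1)
    have h2 := addf a n l
    rw [show n + (l + 2) + 1 = (n + l + 1) + 2 from by omega, xr a (n + l + 1),
      show n + l + 1 + 1 = n + (l + 1) + 1 from by omega, h1, h2,
      show l + 2 + 1 = (l + 1) + 2 from rfl, xr a (l + 1), xr a l]
    ring

lemma cat (a l : ℕ) : ∀ m, x a (m + 2) * x a (m + l + 1) - x a (m + 1) * x a (m + l + 2) =
    (-(a : ℤ)) ^ (m + 1) * x a l
  | 0 => by
    have h2 : x a 2 = 1 := by rw [show (2 : ℕ) = 0 + 2 from rfl, xr]; simp [x]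
    rw [show (0 : ℕ) + 2 = 2 from rfl, show 0 + l + 1 = l + 1 from by omega,
      show (0 : ℕ) + 1 = 1 from rfl, show 0 + l + 2 = l + 2 from by omega, h2, xr a l]
    simp [x]
  | m + 1 => by
    have h := cat a l m
    rw [show m + 1 + 2 = (m + 1) + 2 from rfl, xr a (m + 1),
      show m + 1 + l + 1 = m + l + 2 from by omega,
      show m + 1 + l + 2 = (m + l + 1) + 2 from by omega, xr a (m + l + 1),
      show m + l + 1 + 1 = m + l + 2 from by omega]
    linear_combination (-(a : ℤ)) * h

theorem stmt16 (a : ℕ) (ha : a ≠ 0) : ∀ n l : ℕ,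
    x a n * y a (n + l) = x a (2 * n + l) - (-(a : ℤ)) ^ n * x a l := by
  intro n l
  match n with
  | 0 => simp [x]
  | m + 1 =>
    have hc := cat a l m
    have hx := xr a m
    rw [yx a (m + 1 + l),
      show 2 * (m + 1) + l = m + (m + l + 1) + 1 from by omega, addf a m (m + l + 1),
      show m + 1 + l + 1 = m + l + 2 from by omega,
      show m + 1 + l = m + l + 1 from by omega,
      show m + l + 1 + 1 = m + l + 2 from by omega]
    linear_combination -hc + x a (m + l + 1) * hx
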